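/- arXiv:1906.08441 — 2 statements merged into one kernel-verified Lean document; each statement's English description precedes it below -/
import Mathlib

section
/- Let (X,φ) and (Y,ψ) be Smale spaces. Suppose there exist a homeomorphism h : X → Y, a continuous function c₁ : X → ℤ, and a nonnegative integer K such that (ψ^{c₁(x)}(h(x)), h(φ(x))) ∈ G_ψ^{a,K} for all x ∈ X. Then for each n ∈ ℤ there exists a nonnegative integer K_n such that (ψ^{c₁^n(x)}(h(x)), h(φ^n(x))) ∈ G_ψ^{a,K_n} for all x ∈ X. -/
open Filter Set Topology

noncomputable section

/-- Integer iterate of a homeomorphism. -/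
def hIter {X : Type*} [TopologicalSpace X] (φ : X ≃ₜ X) (n : ℤ) (x : X) : X :=
  ((φ.toEquiv : Equiv.Perm X) ^ n) x

/-- The cocycle sums `f^n` of a function `f : X → ℤ` along the iterates of `φ`:
`f^n(x) = Σ_{i=0}^{n-1} f(φ^i(x))` for `n > 0`, `f^0 = 0`, and
`f^n(x) = −Σ_{i=n}^{-1} f(φ^i(x))` for `n < 0`. -/
def cSum {X : Type*} [TopologicalSpace X] (φ : X ≃ₜ X) (f : X → ℤ) (n : ℤ) (x : X) : ℤ :=
  if 0 ≤ n then ∑ i ∈ Finset.range n.toNat, f (hIter φ i x)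
  else -∑ i ∈ Finset.range (-n).toNat, f (hIter φ (n + i) x)

/-- Stable asymptotic pairs (limit definition). -/
def asympS {X : Type*} [MetricSpace X] (φ : X ≃ₜ X) : Set (X × X) :=
  {p | Tendsto (fun n : ℕ => dist (hIter φ n p.1) (hIter φ n p.2)) atTop (nhds 0)}

/-- Unstable asymptotic pairs (limit definition). -/
def asympU {X : Type*} [MetricSpace X] (φ : X ≃ₜ X) : Set (X × X) :=
  {p | Tendsto (fun n : ℕ => dist (hIter φ (-(n : ℤ)) p.1) (hIter φ (-(n : ℤ)) p.2))
    atTop (nhds 0)}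

/-- Asymptotic pairs (limit definition). -/
def asympA {X : Type*} [MetricSpace X] (φ : X ≃ₜ X) : Set (X × X) := asympS φ ∩ asympU φ

/-- The `ω`-limit set of `x`. -/
def omegaSet {X : Type*} [MetricSpace X] (φ : X ≃ₜ X) (x : X) : Set X :=
  {z | ∃ n : ℕ → ℕ, StrictMono n ∧ Tendsto (fun i => hIter φ (n i) x) atTop (nhds z)}

/-- The `α`-limit set of `x`. -/
def alphaSet {X : Type*} [MetricSpace X] (φ : X ≃ₜ X) (x : X) : Set X :=
  {z | ∃ n : ℕ → ℤ, StrictAnti n ∧ Tendsto (fun i => hIter φ (n i) x) atTop (nhds z)}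

/-- A Smale space structure on a compact metric space `X`. -/
structure SmaleSpace (X : Type*) [MetricSpace X] [CompactSpace X] where
  phi : X ≃ₜ X
  eps : ℝ
  lam : ℝ
  br : X → X → X
  eps_pos : 0 < eps
  lam_pos : 0 < lam
  lam_lt_one : lam < 1
  br_cont : ContinuousOn (fun p : X × X => br p.1 p.2) {p : X × X | dist p.1 p.2 < eps}
  br_self : ∀ x : X, br x x = x
  br_assoc_left : ∀ x y z : X, dist x y < eps → dist (br x y) z < eps → dist x z < eps →
    br (br x y) z = br x z
  br_assoc_right : ∀ x y z : X, dist y z < eps → dist x (br y z) < eps → dist x z < eps →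
    br x (br y z) = br x z
  phi_br : ∀ x y : X, dist x y < eps → dist (phi x) (phi y) < eps →
    phi (br x y) = br (phi x) (phi y)
  contract_s : ∀ x y z : X, br y x = y → dist x y < eps → br z x = z → dist x z < eps →
    dist (phi y) (phi z) ≤ lam * dist y z
  contract_u : ∀ x y z : X, br x y = y → dist x y < eps → br x z = z → dist x z < eps →
    dist (phi.symm y) (phi.symm z) ≤ lam * dist y z

namespace SmaleSpace

variable {X Y : Type*} [MetricSpace X] [CompactSpace X] [MetricSpace Y] [CompactSpace Y]

/-- Local stable set `X^s(x,ε)`. -/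
def Xs (S : SmaleSpace X) (x : X) (ε : ℝ) : Set X := {y | S.br y x = y ∧ dist x y < ε}

/-- Local unstable set `X^u(x,ε)`. -/
def Xu (S : SmaleSpace X) (x : X) (ε : ℝ) : Set X := {y | S.br x y = y ∧ dist x y < ε}

def Gs0 (S : SmaleSpace X) : Set (X × X) := {p | p.2 ∈ S.Xs p.1 S.eps}

def Gu0 (S : SmaleSpace X) : Set (X × X) := {p | p.2 ∈ S.Xu p.1 S.eps}

/-- `G_φ^{s,n} = (φ×φ)^{-n}(G_φ^{s,0})`. -/
def GsN (S : SmaleSpace X) (n : ℤ) : Set (X × X) :=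
  {p | (hIter S.phi n p.1, hIter S.phi n p.2) ∈ S.Gs0}

/-- `G_φ^{u,n} = (φ×φ)^{n}(G_φ^{u,0})`. -/
def GuN (S : SmaleSpace X) (n : ℤ) : Set (X × X) :=
  {p | (hIter S.phi (-n) p.1, hIter S.phi (-n) p.2) ∈ S.Gu0}

def GaN (S : SmaleSpace X) (n : ℤ) : Set (X × X) := S.GsN n ∩ S.GuN n

/-- The asymptotic equivalence relation `G_φ^a = ⋃_{n ≥ 0} G_φ^{a,n}`. -/
def Ga (S : SmaleSpace X) : Set (X × X) := ⋃ n : ℕ, S.GaN n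

lemma gaN_subset_ga (S : SmaleSpace X) (n : ℕ) : S.GaN n ⊆ S.Ga :=
  Set.subset_iUnion (fun k : ℕ => S.GaN k) n

/-- The inductive limit topology on `G_φ^a`: a set is open iff its intersection with each
`G_φ^{a,n}` is open in the subspace topology from `X × X`. -/
def gaTopology (S : SmaleSpace X) : TopologicalSpace ↥S.Ga :=
  ⨆ n : ℕ, TopologicalSpace.coinduced (Set.inclusion (S.gaN_subset_ga n)) inferInstance

/-- Irreducibility of a Smale space. -/
def Irreducible (S : SmaleSpace X) : Prop :=
  ∀ U V : Set X, IsOpen U → U.Nonempty → IsOpen V → V.Nonempty →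
    ∃ K : ℕ, ((hIter S.phi K '' U) ∩ V).Nonempty

def IsPeriodicPoint (S : SmaleSpace X) (x : X) : Prop :=
  ∃ p : ℕ, 0 < p ∧ hIter S.phi p x = x

/-- `h` is a flip conjugacy between `(X,φ)` and `(Y,ψ)`. -/
def IsFlipConjugacy (S : SmaleSpace X) (T : SmaleSpace Y) (h : X ≃ₜ Y) : Prop :=
  (∀ x, h (S.phi x) = T.phi (h x)) ∨ (∀ x, h (S.phi x) = T.phi.symm (h x))

def FlipConjugate (S : SmaleSpace X) (T : SmaleSpace Y) : Prop :=
  ∃ h : X ≃ₜ Y, IsFlipConjugacy S T h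

/-- An isomorphism of the principal étale groupoids `G_φ^a` and `G_ψ^a`:
a bijection which is a homeomorphism for the inductive limit topologies and preserves
the (equivalence relation) groupoid structure. -/
structure GaIso (S : SmaleSpace X) (T : SmaleSpace Y) where
  toEquiv : ↥S.Ga ≃ ↥T.Ga
  cont : @Continuous _ _ S.gaTopology T.gaTopology toEquiv
  cont_symm : @Continuous _ _ T.gaTopology S.gaTopology toEquiv.symm
  map_mul : ∀ p q r : ↥S.Ga, (p : X × X).2 = (q : X × X).1 →
    (r : X × X) = ((p : X × X).1, (q : X × X).2) →
    (toEquiv p : Y × Y).2 = (toEquiv q : Y × Y).1 ∧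
      (toEquiv r : Y × Y) = ((toEquiv p : Y × Y).1, (toEquiv q : Y × Y).2)

end SmaleSpace

/-!
Write `F n x = ψ^{c₁^n(x)}(h x)` and `H n x = h(φ^n x)`, and call two maps into `Y` uniformly
asymptotic if all their pairs lie in one `G_ψ^{a,N}`. This is an equivalence relation: the
bracket identities make `G_ψ^{s,0}` transitive on pairs closer than `ε_Y`, and `ψ` contracts
stable pairs, so `G_ψ^{s,N}` is transitive up to raising `N` by a fixed amount; reversing time
gives the same for `G_ψ^{u,N}`. Applying `ψ^m` with `m` bounded preserves the relation in both
directions, and `c₁` is bounded by compactness. Since `F (n+1) x = ψ^{c₁(φ^n x)}(F n x)` and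
the hypothesis at `φ^n x` relates `ψ^{c₁(φ^n x)}(H n x)` to `H (n+1) x`, the pair `F n, H n` is
uniformly asymptotic iff `F (n+1), H (n+1)` is, and `F 0 = H 0`.
-/

section Iterate

variable {Z : Type*} [TopologicalSpace Z] (φ : Z ≃ₜ Z)

theorem hIter_add (a b : ℤ) (x : Z) : hIter φ (a + b) x = hIter φ a (hIter φ b x) := by
  simp [hIter, zpow_add, Equiv.Perm.mul_apply]

@[simp]
theorem hIter_zero (x : Z) : hIter φ 0 x = x := by
  simp [hIter]

theorem hIter_add_one (n : ℤ) (x : Z) : hIter φ (n + 1) x = φ (hIter φ n x) := by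
  rw [add_comm, hIter_add]
  simp [hIter]

theorem hIter_natCast_succ (n : ℕ) (x : Z) : hIter φ (n + 1 : ℕ) x = φ (hIter φ n x) := by
  rw [Nat.cast_succ, hIter_add_one]

theorem hIter_neg_hIter (n : ℤ) (x : Z) : hIter φ (-n) (hIter φ n x) = x := by
  rw [← hIter_add, neg_add_cancel, hIter_zero]

theorem hIter_symm (n : ℤ) (x : Z) : hIter φ.symm n x = hIter φ (-n) x := by
  have h : (φ.symm.toEquiv : Equiv.Perm Z) = (φ.toEquiv : Equiv.Perm Z)⁻¹ := rfl
  simp [hIter, h]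

theorem cSum_natCast (f : Z → ℤ) (k : ℕ) (x : Z) :
    cSum φ f k x = ∑ i ∈ Finset.range k, f (hIter φ i x) := by
  simp [cSum]

theorem cSum_neg_natCast (f : Z → ℤ) (k : ℕ) (x : Z) :
    cSum φ f (-k) x = -∑ i ∈ Finset.range k, f (hIter φ (-k + i) x) := by
  rcases k with _ | k
  · simp [cSum]
  · rw [cSum, if_neg (by omega)]
    simp

theorem cSum_add_one (f : Z → ℤ) (n : ℤ) (x : Z) :
    cSum φ f (n + 1) x = cSum φ f n x + f (hIter φ n x) := by
  obtain ⟨k, rfl | rfl⟩ := Int.eq_nat_or_neg n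
  · rw [← Nat.cast_succ, cSum_natCast, cSum_natCast, Finset.sum_range_succ]
  rcases k with _ | k
  · simp [cSum]
  have hshift (i : ℕ) : -((k + 1 : ℕ) : ℤ) + (i + 1 : ℕ) = -k + i := by push_cast; ring
  rw [show -((k + 1 : ℕ) : ℤ) + 1 = -k by push_cast; ring, cSum_neg_natCast, cSum_neg_natCast,
    Finset.sum_range_succ']
  simp only [hshift, Nat.cast_zero, add_zero]
  ring

end Iterate

namespace SmaleSpace

section Relations

variable {Y : Type*} [MetricSpace Y] [CompactSpace Y] (T : SmaleSpace Y)

theorem mem_gsN {n : ℤ} {a b : Y} :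
    (a, b) ∈ T.GsN n ↔ (hIter T.phi n a, hIter T.phi n b) ∈ T.Gs0 := Iff.rfl

theorem mem_guN {n : ℤ} {a b : Y} :
    (a, b) ∈ T.GuN n ↔ (hIter T.phi (-n) a, hIter T.phi (-n) b) ∈ T.Gu0 := Iff.rfl

theorem dist_phi_le_of_mem_gs0 {y w : Y} (h : (y, w) ∈ T.Gs0) :
    dist (T.phi y) (T.phi w) ≤ T.lam * dist y w := by
  rw [dist_comm, dist_comm y]
  exact T.contract_s y w y h.1 h.2 (T.br_self y) (by simpa using T.eps_pos)

theorem phi_mem_gs0 {y w : Y} (h : (y, w) ∈ T.Gs0) : (T.phi y, T.phi w) ∈ T.Gs0 := by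
  have hlt : dist (T.phi y) (T.phi w) < T.eps :=
    (T.dist_phi_le_of_mem_gs0 h).trans_lt <|
      (mul_le_of_le_one_left dist_nonneg T.lam_lt_one.le).trans_lt h.2
  refine ⟨?_, hlt⟩
  rw [← T.phi_br w y (by rw [dist_comm]; exact h.2) (by rwa [dist_comm]), h.1]

theorem hIter_mem_gs0 {y w : Y} (h : (y, w) ∈ T.Gs0) (n : ℕ) :
    (hIter T.phi n y, hIter T.phi n w) ∈ T.Gs0 := by
  induction n with
  | zero => simpa using h
  | succ n ih => simpa only [hIter_natCast_succ] using T.phi_mem_gs0 ih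

theorem dist_hIter_le_of_mem_gs0 {y w : Y} (h : (y, w) ∈ T.Gs0) (n : ℕ) :
    dist (hIter T.phi n y) (hIter T.phi n w) ≤ T.lam ^ n * dist y w := by
  induction n with
  | zero => simp
  | succ n ih =>
    rw [hIter_natCast_succ, hIter_natCast_succ, pow_succ', mul_assoc]
    exact (T.dist_phi_le_of_mem_gs0 (T.hIter_mem_gs0 h n)).trans
      (mul_le_mul_of_nonneg_left ih T.lam_pos.le)

theorem gsN_mono {m n : ℤ} (hmn : m ≤ n) : T.GsN m ⊆ T.GsN n := by
  rintro ⟨a, b⟩ hab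
  have e (z : Y) : hIter T.phi n z = hIter T.phi (n - m).toNat (hIter T.phi m z) := by
    rw [← hIter_add, Int.toNat_of_nonneg (by omega), sub_add_cancel]
  rw [mem_gsN, e, e]
  exact T.hIter_mem_gs0 hab _

theorem hIter_mem_gsN_iff (k : ℤ) {n : ℤ} {a b : Y} :
    (hIter T.phi k a, hIter T.phi k b) ∈ T.GsN n ↔ (a, b) ∈ T.GsN (n + k) := by
  rw [mem_gsN, mem_gsN, hIter_add, hIter_add]

theorem hIter_mem_guN_iff (k : ℤ) {n : ℤ} {a b : Y} :
    (hIter T.phi k a, hIter T.phi k b) ∈ T.GuN n ↔ (a, b) ∈ T.GuN (n - k) := by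
  rw [mem_guN, mem_guN, ← hIter_add, ← hIter_add, neg_add_eq_sub, neg_sub]

theorem gsN_symm {n : ℤ} {a b : Y} (h : (a, b) ∈ T.GsN n) : (b, a) ∈ T.GsN n := by
  refine ⟨?_, by rw [dist_comm]; exact h.2⟩
  have := T.br_assoc_right _ _ _ (by rw [dist_comm]; exact h.2) (by rw [h.1]; exact h.2)
    (by simpa using T.eps_pos)
  rwa [h.1, T.br_self] at this

/-- The bracket identity `[c, [b, a]] = [c, a]` turns `b = [b, a]` and `c = [c, b]` into
`c = [c, a]`. -/
theorem gs0_trans_of_dist_lt {a b c : Y} (hab : (a, b) ∈ T.Gs0) (hbc : (b, c) ∈ T.Gs0)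
    (hac : dist a c < T.eps) : (a, c) ∈ T.Gs0 := by
  refine ⟨?_, hac⟩
  have := T.br_assoc_right c b a (by rw [dist_comm]; exact hab.2)
    (by rw [hab.1, dist_comm]; exact hbc.2) (by rwa [dist_comm])
  rw [← this, hab.1, hbc.1]

theorem exists_gsN_trans : ∃ m : ℕ, ∀ a b c : Y,
    (a, b) ∈ T.Gs0 → (b, c) ∈ T.Gs0 → (a, c) ∈ T.GsN m := by
  obtain ⟨m, hm⟩ := exists_pow_lt_of_lt_one (by norm_num : (0 : ℝ) < 1 / 2) T.lam_lt_one
  refine ⟨m, fun a b c hab hbc => ?_⟩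
  refine T.gs0_trans_of_dist_lt (T.hIter_mem_gs0 hab m) (T.hIter_mem_gs0 hbc m) ?_
  have hlam := pow_nonneg T.lam_pos.le m
  calc dist (hIter T.phi m a) (hIter T.phi m c)
      ≤ dist (hIter T.phi m a) (hIter T.phi m b) + dist (hIter T.phi m b) (hIter T.phi m c) :=
        dist_triangle _ _ _
    _ ≤ T.lam ^ m * dist a b + T.lam ^ m * dist b c :=
        add_le_add (T.dist_hIter_le_of_mem_gs0 hab m) (T.dist_hIter_le_of_mem_gs0 hbc m)
    _ < 1 / 2 * T.eps + 1 / 2 * T.eps :=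
        add_lt_add (mul_lt_mul'' hm hab.2 hlam dist_nonneg) (mul_lt_mul'' hm hbc.2 hlam dist_nonneg)
    _ = T.eps := by ring

theorem gsN_trans : ∃ m : ℕ, ∀ (n : ℤ) (a b c : Y),
    (a, b) ∈ T.GsN n → (b, c) ∈ T.GsN n → (a, c) ∈ T.GsN (n + m) := by
  obtain ⟨m, hm⟩ := T.exists_gsN_trans
  refine ⟨m, fun n a b c hab hbc => ?_⟩
  rw [add_comm, ← hIter_mem_gsN_iff]
  exact hm _ _ _ hab hbc

/-- Time reversal: `ψ⁻¹` with the bracket `(x, y) ↦ [y, x]`; it swaps stable and unstable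
sets. -/
def reverse : SmaleSpace Y where
  phi := T.phi.symm
  eps := T.eps
  lam := T.lam
  br x y := T.br y x
  eps_pos := T.eps_pos
  lam_pos := T.lam_pos
  lam_lt_one := T.lam_lt_one
  br_cont := T.br_cont.comp continuous_swap.continuousOn fun p hp => by
    simpa [dist_comm] using hp
  br_self := T.br_self
  br_assoc_left x y z _ _ _ :=
    T.br_assoc_right z y x (by rwa [dist_comm]) (by rwa [dist_comm]) (by rwa [dist_comm])
  br_assoc_right x y z _ _ _ :=
    T.br_assoc_left z y x (by rwa [dist_comm]) (by rwa [dist_comm]) (by rwa [dist_comm])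
  phi_br x y h₁ h₂ := by
    rw [Homeomorph.symm_apply_eq,
      T.phi_br _ _ (by rwa [dist_comm]) (by simpa [dist_comm] using h₁)]
    simp
  contract_s := T.contract_u
  contract_u x y z h₁ h₂ h₃ h₄ := by
    simpa using T.contract_s x y z h₁ h₂ h₃ h₄

theorem reverse_gsN (n : ℤ) : T.reverse.GsN n = T.GuN n := by
  ext p
  simp only [GsN, GuN, reverse, hIter_symm]
  rfl

theorem guN_mono {m n : ℤ} (hmn : m ≤ n) : T.GuN m ⊆ T.GuN n := by
  simpa only [reverse_gsN] using T.reverse.gsN_mono hmn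

theorem guN_symm {n : ℤ} {a b : Y} (h : (a, b) ∈ T.GuN n) : (b, a) ∈ T.GuN n := by
  rw [← reverse_gsN] at h ⊢
  exact T.reverse.gsN_symm h

theorem guN_trans : ∃ m : ℕ, ∀ (n : ℤ) (a b c : Y),
    (a, b) ∈ T.GuN n → (b, c) ∈ T.GuN n → (a, c) ∈ T.GuN (n + m) := by
  simpa only [reverse_gsN] using T.reverse.gsN_trans

theorem gaN_mono {m n : ℤ} (hmn : m ≤ n) : T.GaN m ⊆ T.GaN n :=
  inter_subset_inter (T.gsN_mono hmn) (T.guN_mono hmn)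

theorem gaN_symm {n : ℤ} {a b : Y} (h : (a, b) ∈ T.GaN n) : (b, a) ∈ T.GaN n :=
  ⟨T.gsN_symm h.1, T.guN_symm h.2⟩

theorem gaN_trans : ∃ m : ℕ, ∀ (n : ℤ) (a b c : Y),
    (a, b) ∈ T.GaN n → (b, c) ∈ T.GaN n → (a, c) ∈ T.GaN (n + m) := by
  obtain ⟨ms, hs⟩ := T.gsN_trans
  obtain ⟨mu, hu⟩ := T.guN_trans
  refine ⟨max ms mu, fun n a b c hab hbc => ⟨?_, ?_⟩⟩
  · exact T.gsN_mono (by omega) (hs n a b c hab.1 hbc.1)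
  · exact T.guN_mono (by omega) (hu n a b c hab.2 hbc.2)

theorem self_mem_gaN (n : ℤ) (y : Y) : (y, y) ∈ T.GaN n := by
  have h (z : Y) : (z, z) ∈ T.Gs0 := ⟨T.br_self z, by simpa using T.eps_pos⟩
  exact ⟨h _, h _⟩

theorem hIter_mem_gaN {n : ℤ} (k : ℤ) {a b : Y} (h : (a, b) ∈ T.GaN n) :
    (hIter T.phi k a, hIter T.phi k b) ∈ T.GaN (n + |k|) := by
  rw [GaN, mem_inter_iff, hIter_mem_gsN_iff, hIter_mem_guN_iff]
  exact ⟨T.gsN_mono (by linarith [neg_abs_le k]) h.1,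
    T.guN_mono (by linarith [le_abs_self k]) h.2⟩

end Relations

section UniformlyAsymptotic

variable {α Y : Type*} [MetricSpace Y] [CompactSpace Y]

def UniformlyAsymptotic (T : SmaleSpace Y) (f g : α → Y) : Prop :=
  ∃ N : ℤ, ∀ x, (f x, g x) ∈ T.GaN N

variable {T : SmaleSpace Y} {f g k : α → Y}

theorem uniformlyAsymptotic_refl (T : SmaleSpace Y) (f : α → Y) : T.UniformlyAsymptotic f f :=
  ⟨0, fun x => T.self_mem_gaN 0 (f x)⟩

theorem UniformlyAsymptotic.symm (h : T.UniformlyAsymptotic f g) : T.UniformlyAsymptotic g f :=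
  let ⟨N, hN⟩ := h
  ⟨N, fun x => T.gaN_symm (hN x)⟩

theorem UniformlyAsymptotic.trans (hfg : T.UniformlyAsymptotic f g)
    (hgk : T.UniformlyAsymptotic g k) : T.UniformlyAsymptotic f k := by
  obtain ⟨N₁, h₁⟩ := hfg
  obtain ⟨N₂, h₂⟩ := hgk
  obtain ⟨m, hm⟩ := T.gaN_trans
  exact ⟨max N₁ N₂ + m, fun x => hm _ _ _ _ (T.gaN_mono (le_max_left _ _) (h₁ x))
    (T.gaN_mono (le_max_right _ _) (h₂ x))⟩

theorem UniformlyAsymptotic.hIter {m : α → ℤ} (hm : BddAbove (range fun x => |m x|))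
    (h : T.UniformlyAsymptotic f g) :
    T.UniformlyAsymptotic (fun x => hIter T.phi (m x) (f x))
      (fun x => hIter T.phi (m x) (g x)) := by
  obtain ⟨B, hB⟩ := hm
  obtain ⟨N, hN⟩ := h
  exact ⟨N + B, fun x => T.gaN_mono (by linarith [hB (mem_range_self x)])
    (T.hIter_mem_gaN (m x) (hN x))⟩

theorem uniformlyAsymptotic_hIter_iff {m : α → ℤ} (hm : BddAbove (range fun x => |m x|)) :
    T.UniformlyAsymptotic (fun x => hIter T.phi (m x) (f x))
        (fun x => hIter T.phi (m x) (g x)) ↔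
      T.UniformlyAsymptotic f g := by
  refine ⟨fun h => ?_, fun h => h.hIter hm⟩
  have hm' : BddAbove (range fun x => |-m x|) := by simpa only [abs_neg] using hm
  simpa only [hIter_neg_hIter] using h.hIter hm'

end UniformlyAsymptotic

end SmaleSpace

/-- If `(ψ^{c₁(x)}(h(x)), h(φ(x))) ∈ G_ψ^{a,K}` for all `x`, then for each
`n ∈ ℤ` there is `K_n ∈ ℤ_{≥0}` with `(ψ^{c₁^n(x)}(h(x)), h(φ^n(x))) ∈ G_ψ^{a,K_n}`
for all `x`. -/
theorem gaN_iterate_bound {X Y : Type*} [MetricSpace X] [CompactSpace X]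
    [MetricSpace Y] [CompactSpace Y] (S : SmaleSpace X) (T : SmaleSpace Y)
    (h : X ≃ₜ Y) (c₁ : X → ℤ) (hc₁ : Continuous c₁) (K : ℕ)
    (hK : ∀ x : X, (hIter T.phi (c₁ x) (h x), h (S.phi x)) ∈ T.GaN (K : ℤ)) :
    ∀ n : ℤ, ∃ Kn : ℕ, ∀ x : X,
      (hIter T.phi (cSum S.phi c₁ n x) (h x), h (hIter S.phi n x)) ∈ T.GaN (Kn : ℤ) := by
  let F (n : ℤ) (x : X) : Y := hIter T.phi (cSum S.phi c₁ n x) (h x)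
  let H (n : ℤ) (x : X) : Y := h (hIter S.phi n x)
  have hc₁_bdd : BddAbove (range fun x => |c₁ x|) :=
    (isCompact_range (continuous_abs.comp hc₁)).bddAbove
  have step (n : ℤ) : T.UniformlyAsymptotic (F n) (H n) ↔
      T.UniformlyAsymptotic (F (n + 1)) (H (n + 1)) := by
    let m (x : X) : ℤ := c₁ (hIter S.phi n x)
    have hm : BddAbove (range fun x => |m x|) :=
      hc₁_bdd.mono (range_comp_subset_range (hIter S.phi n) fun x => |c₁ x|)
    have hF : (fun x => hIter T.phi (m x) (F n x)) = F (n + 1) := by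
      ext x
      rw [← hIter_add, add_comm, ← cSum_add_one]
    have hK' : T.UniformlyAsymptotic (fun x => hIter T.phi (m x) (H n x)) (H (n + 1)) :=
      ⟨K, fun x => by simpa only [H, hIter_add_one] using hK (hIter S.phi n x)⟩
    rw [← T.uniformlyAsymptotic_hIter_iff hm, hF]
    exact ⟨fun hn => hn.trans hK', fun hn => hn.trans hK'.symm⟩
  intro n
  obtain ⟨N, hN⟩ : T.UniformlyAsymptotic (F n) (H n) := by
    induction n using Int.induction_on with
    | zero => simpa [F, H, cSum] using T.uniformlyAsymptotic_refl h
    | succ i ih => exact (step i).1 ih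
    | pred i ih => exact (step _).2 (by simpa using ih)
  exact ⟨N.toNat, fun x => T.gaN_mono (Int.self_le_toNat N) (hN x)⟩
end
end

section
/- Let (X,φ) be a Smale space and let x ∈ X be an asymptotic periodic point. Then the following conditions are equivalent: (i) x ∈ ω(x) ∪ α(x); (ii) x is a periodic point; (iii) ω(x) = α(x) = {x, φ(x), …, φ^{p_s−1}(x)} for some p_s ∈ ℕ; (iv) x is a recurrent point, i.e., x ∈ ω(x) ∩ α(x). -/
open Filter Set Topology

noncomputable section

/-!
If `φ^{n_i} x → x` with `n_i → ∞`, then `φ^{n_i} (φ^p x) = φ^p (φ^{n_i} x) → φ^p x` by continuity,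
while stable asymptoticity of `(φ^p x, x)` makes the same sequence converge to `x`; hence
`φ^p x = x`. For `n_i → -∞` the unstable half of asymptoticity gives the same conclusion.
Conversely, the forward and backward orbits of a periodic point both run through its finite
orbit `{x, φ x, …, φ^{q-1} x}` infinitely often, so that orbit is its `ω`- and its `α`-limit set.
-/

section Iterates

variable {X : Type*} [TopologicalSpace X] (φ : X ≃ₜ X) {x : X}

lemma hIter_add_s15 (m n : ℤ) (x : X) : hIter φ (m + n) x = hIter φ m (hIter φ n x) := by
  simp only [hIter, zpow_add, Equiv.Perm.mul_apply]

lemma hIter_eq_zpow_apply (n : ℤ) (x : X) : hIter φ n x = (φ ^ n) x := by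
  induction n using Int.induction_on with
  | zero => rfl
  | succ k ih => rw [add_comm, hIter_add_s15, ih, zpow_add, zpow_one, Homeomorph.mul_apply]; rfl
  | pred k ih =>
    rw [sub_eq_add_neg, add_comm, hIter_add_s15, ih, zpow_add, zpow_neg_one, Homeomorph.mul_apply]
    rfl

lemma continuous_hIter (n : ℤ) : Continuous (hIter φ n) := by
  simpa only [funext (hIter_eq_zpow_apply φ n)] using (φ ^ n).continuous

lemma hIter_mul_eq_self {q : ℤ} (h : hIter φ q x = x) (m : ℤ) : hIter φ (q * m) x = x := by
  simp only [hIter, zpow_mul] at h ⊢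
  exact Equiv.Perm.zpow_apply_eq_self_of_apply_eq_self h m

lemma exists_pos_hIter_eq_self {p : ℤ} (hp : p ≠ 0) (h : hIter φ p x = x) :
    ∃ q : ℕ, 0 < q ∧ hIter φ q x = x :=
  ⟨p.natAbs, Int.natAbs_pos.2 hp, by
    rw [← Int.sign_mul_self_eq_natAbs, mul_comm]; exact hIter_mul_eq_self φ h _⟩

lemma hIter_emod {q : ℕ} (h : hIter φ q x = x) (n : ℤ) : hIter φ (n % q) x = hIter φ n x := by
  conv_rhs => rw [← Int.emod_add_mul_ediv n q]
  rw [hIter_add_s15, hIter_mul_eq_self φ h]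

end Iterates

lemma StrictAnti.tendsto_atBot_int {f : ℕ → ℤ} (hf : StrictAnti f) : Tendsto f atTop atBot := by
  have h_le : ∀ i : ℕ, f i ≤ f 0 - i := by
    intro i
    induction i with
    | zero => simp
    | succ k ih => have := hf (Nat.lt_add_one k); push_cast; omega
  refine tendsto_atBot.2 fun b => eventually_atTop.2 ⟨(f 0 - b).toNat, fun i hi => ?_⟩
  have := h_le i
  omega

section LimitSets

variable {X : Type*} [MetricSpace X] (φ : X ≃ₜ X) {x : X}

lemma tendsto_dist_hIter_atBot_of_mem_asympU {y : X} (h : (y, x) ∈ asympU φ) :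
    Tendsto (fun m : ℤ => dist (hIter φ m y) (hIter φ m x)) atBot (𝓝 0) := by
  rw [← tendsto_comp_neg_atTop_iff, ← Nat.map_cast_int_atTop, tendsto_map'_iff]
  exact h

lemma hIter_eq_self_of_tendsto {ι : Type*} {l : Filter ι} [l.NeBot] {n : ι → ℤ} (p : ℤ)
    (hrec : Tendsto (fun i => hIter φ (n i) x) l (𝓝 x))
    (hasym : Tendsto (fun i => dist (hIter φ (n i) (hIter φ p x)) (hIter φ (n i) x)) l (𝓝 0)) :
    hIter φ p x = x := by
  have hcomm : ∀ i, hIter φ (n i) (hIter φ p x) = hIter φ p (hIter φ (n i) x) := fun i => by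
    rw [← hIter_add_s15, ← hIter_add_s15, add_comm]
  have hshift : Tendsto (fun i => hIter φ (n i) (hIter φ p x)) l (𝓝 (hIter φ p x)) := by
    simp only [hcomm]
    exact ((continuous_hIter φ p).tendsto x).comp hrec
  refine tendsto_nhds_unique hshift (hrec.congr_dist ?_)
  simpa only [dist_comm] using hasym

lemma periodic_of_mem_omegaSet_union_alphaSet {p : ℤ} (hp : p ≠ 0)
    (hA : (hIter φ p x, x) ∈ asympA φ) (hx : x ∈ omegaSet φ x ∪ alphaSet φ x) :
    ∃ q : ℕ, 0 < q ∧ hIter φ q x = x := by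
  refine exists_pos_hIter_eq_self φ hp ?_
  rcases hx with ⟨n, hn, hlim⟩ | ⟨n, hn, hlim⟩
  · exact hIter_eq_self_of_tendsto φ p hlim (hA.1.comp hn.tendsto_atTop)
  · exact hIter_eq_self_of_tendsto φ p hlim
      ((tendsto_dist_hIter_atBot_of_mem_asympU φ hA.2).comp hn.tendsto_atBot_int)

def orbitSegment (x : X) (q : ℕ) : Set X := {z | ∃ j : ℕ, j < q ∧ z = hIter φ j x}

lemma self_mem_orbitSegment {q : ℕ} (hq : 0 < q) : x ∈ orbitSegment φ x q := ⟨0, hq, rfl⟩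

lemma isClosed_orbitSegment (x : X) (q : ℕ) : IsClosed (orbitSegment φ x q) := by
  refine Set.Finite.isClosed ?_
  convert (Set.finite_Iio q).image fun j : ℕ => hIter φ j x using 1
  ext z
  simp [orbitSegment, eq_comm]

lemma hIter_mem_orbitSegment {q : ℕ} (hq : 0 < q) (h : hIter φ q x = x) (n : ℤ) :
    hIter φ n x ∈ orbitSegment φ x q := by
  have hq' : (0 : ℤ) < q := by exact_mod_cast hq
  refine ⟨(n % q).toNat, by have := Int.emod_lt_of_pos n hq'; omega, ?_⟩
  rw [Int.toNat_of_nonneg (Int.emod_nonneg n hq'.ne'), hIter_emod φ h]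

lemma omegaSet_subset_of_isClosed {T : Set X} (hT : IsClosed T) (h : ∀ n : ℤ, hIter φ n x ∈ T) :
    omegaSet φ x ⊆ T :=
  fun _ ⟨_, _, hlim⟩ => hT.mem_of_tendsto hlim (Eventually.of_forall fun _ => h _)

lemma alphaSet_subset_of_isClosed {T : Set X} (hT : IsClosed T) (h : ∀ n : ℤ, hIter φ n x ∈ T) :
    alphaSet φ x ⊆ T :=
  fun _ ⟨_, _, hlim⟩ => hT.mem_of_tendsto hlim (Eventually.of_forall fun _ => h _)

lemma hIter_mem_omegaSet {q : ℕ} (hq : 0 < q) (h : hIter φ q x = x) (j : ℕ) :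
    hIter φ j x ∈ omegaSet φ x := by
  refine ⟨fun i => j + q * i, fun a b hab => by dsimp only; gcongr, ?_⟩
  have hconst : ∀ i : ℕ, hIter φ ((j + q * i : ℕ) : ℤ) x = hIter φ j x := fun i => by
    push_cast
    rw [hIter_add_s15, hIter_mul_eq_self φ h]
  simp only [hconst, tendsto_const_nhds]

lemma hIter_mem_alphaSet {q : ℕ} (hq : 0 < q) (h : hIter φ q x = x) (j : ℕ) :
    hIter φ j x ∈ alphaSet φ x := by
  refine ⟨fun i => j - q * i, fun a b hab => by dsimp only; gcongr, ?_⟩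
  have hconst : ∀ i : ℕ, hIter φ ((j : ℤ) - q * i) x = hIter φ j x := fun i => by
    rw [sub_eq_add_neg, hIter_add_s15, ← mul_neg, hIter_mul_eq_self φ h]
  simp only [hconst, tendsto_const_nhds]

lemma limitSets_eq_orbitSegment {q : ℕ} (hq : 0 < q) (h : hIter φ q x = x) :
    omegaSet φ x = orbitSegment φ x q ∧ alphaSet φ x = orbitSegment φ x q := by
  have hmem := hIter_mem_orbitSegment φ hq h
  have hT := isClosed_orbitSegment φ x q
  constructor
  · refine (omegaSet_subset_of_isClosed φ hT hmem).antisymm ?_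
    rintro _ ⟨j, -, rfl⟩
    exact hIter_mem_omegaSet φ hq h j
  · refine (alphaSet_subset_of_isClosed φ hT hmem).antisymm ?_
    rintro _ ⟨j, -, rfl⟩
    exact hIter_mem_alphaSet φ hq h j

end LimitSets

/-- For an asymptotic periodic point `x` of a Smale space, the conditions
(i) `x ∈ ω(x) ∪ α(x)`, (ii) `x` is periodic, (iii) `ω(x) = α(x) = {x, φ(x), …,
φ^{p_s-1}(x)}` for some `p_s ∈ ℕ`, and (iv) `x` is recurrent, are all equivalent. -/
theorem recurrent_iff_periodic {X : Type*} [MetricSpace X] [CompactSpace X]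
    (S : SmaleSpace X) (x : X)
    (hx : ∃ p : ℤ, p ≠ 0 ∧ (hIter S.phi p x, x) ∈ asympA S.phi) :
    ((x ∈ omegaSet S.phi x ∪ alphaSet S.phi x) ↔
      (∃ q : ℕ, 0 < q ∧ hIter S.phi q x = x)) ∧
    ((∃ q : ℕ, 0 < q ∧ hIter S.phi q x = x) ↔
      (∃ ps : ℕ, 0 < ps ∧
        omegaSet S.phi x = {z | ∃ j : ℕ, j < ps ∧ z = hIter S.phi j x} ∧
        alphaSet S.phi x = {z | ∃ j : ℕ, j < ps ∧ z = hIter S.phi j x})) ∧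
    ((∃ ps : ℕ, 0 < ps ∧
        omegaSet S.phi x = {z | ∃ j : ℕ, j < ps ∧ z = hIter S.phi j x} ∧
        alphaSet S.phi x = {z | ∃ j : ℕ, j < ps ∧ z = hIter S.phi j x}) ↔
      x ∈ omegaSet S.phi x ∩ alphaSet S.phi x) := by
  obtain ⟨p, hp, hA⟩ := hx
  have periodic_of_mem := periodic_of_mem_omegaSet_union_alphaSet S.phi hp hA
  have limits_of_periodic : (∃ q : ℕ, 0 < q ∧ hIter S.phi q x = x) → ∃ ps : ℕ, 0 < ps ∧
      omegaSet S.phi x = orbitSegment S.phi x ps ∧ alphaSet S.phi x = orbitSegment S.phi x ps :=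
    fun ⟨q, hq, h⟩ => ⟨q, hq, limitSets_eq_orbitSegment S.phi hq h⟩
  have recurrent_of_limits : (∃ ps : ℕ, 0 < ps ∧ omegaSet S.phi x = orbitSegment S.phi x ps ∧
      alphaSet S.phi x = orbitSegment S.phi x ps) → x ∈ omegaSet S.phi x ∩ alphaSet S.phi x :=
    fun ⟨_, hps, hω, hα⟩ => ⟨hω ▸ self_mem_orbitSegment S.phi hps, hα ▸ self_mem_orbitSegment S.phi hps⟩
  exact ⟨⟨periodic_of_mem, fun h => Or.inl (recurrent_of_limits (limits_of_periodic h)).1⟩,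
    ⟨limits_of_periodic, fun h => periodic_of_mem (Or.inl (recurrent_of_limits h).1)⟩,
    ⟨recurrent_of_limits, fun h => limits_of_periodic (periodic_of_mem (Or.inl h.1))⟩⟩
end
end
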